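/- arXiv:1310.2639 — 3 statements merged into one kernel-verified Lean document; each statement's English description precedes it below -/
import Mathlib

section
/- The epigraph of the polar gauge is the reflected polar of the epigraph: epi κ° = {(y, λ) : (y, −λ) ∈ (epi κ)°}, where (epi κ)° is the polar set of epi κ in X × ℝ. -/
open scoped RealInnerProductSpace ENNReal

def IsGauge {E : Type*} [NormedAddCommGroup E] [NormedSpace ℝ E] (κ : E → ℝ≥0∞) : Prop :=
  κ 0 = 0 ∧
  (∀ (c : ℝ) (x : E), 0 ≤ c → κ (c • x) = ENNReal.ofReal c * κ x) ∧
  (∀ (x y : E) (a b : ℝ), 0 ≤ a → 0 ≤ b → a + b = 1 →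
    κ (a • x + b • y) ≤ ENNReal.ofReal a * κ x + ENNReal.ofReal b * κ y)

/-- The polar gauge `κ°(y) = inf {μ > 0 : ⟨x,y⟩ ≤ μ κ(x) for all x}`. -/
noncomputable def polarGauge {E : Type*} [NormedAddCommGroup E] [InnerProductSpace ℝ E]
    (κ : E → ℝ≥0∞) (y : E) : ℝ≥0∞ :=
  sInf {μ : ℝ≥0∞ | 0 < μ ∧ ∀ x : E, ENNReal.ofReal ⟪x, y⟫ ≤ μ * κ x}

/-- The epigraph of a gauge, as a subset of `E × ℝ`. -/
def gaugeEpi {E : Type*} [NormedAddCommGroup E] [NormedSpace ℝ E] (κ : E → ℝ≥0∞) :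
    Set (E × ℝ) :=
  {p : E × ℝ | 0 ≤ p.2 ∧ κ p.1 ≤ ENNReal.ofReal p.2}

/-- The polar of a set in `E × ℝ`, with the pairing `⟨(y,τ),(x,μ)⟩ = ⟨y,x⟩ + τμ`. -/
def polarSetProd {E : Type*} [NormedAddCommGroup E] [InnerProductSpace ℝ E]
    (S : Set (E × ℝ)) : Set (E × ℝ) :=
  {q : E × ℝ | ∀ p ∈ S, ⟪q.1, p.1⟫ + q.2 * p.2 ≤ 1}

theorem epi_polarGauge_eq {E : Type*} [NormedAddCommGroup E] [InnerProductSpace ℝ E]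
    [FiniteDimensional ℝ E] (κ : E → ℝ≥0∞) (hκ : IsGauge κ) :
    gaugeEpi (polarGauge κ) =
      {q : E × ℝ | (q.1, -q.2) ∈ polarSetProd (gaugeEpi κ)} := by
  obtain ⟨h0, hhom, hconv⟩ := hκ
  ext ⟨y, l⟩
  simp only [gaugeEpi, polarSetProd, polarGauge, Set.mem_setOf_eq]
  constructor
  · rintro ⟨hl, hle⟩ ⟨x, μ⟩ ⟨hμ, hxμ⟩
    have key : ⟪x, y⟫ ≤ l * μ := by
      refine le_of_forall_pos_le_add fun δ hδ => ?_
      have hε : (0:ℝ) < δ / (μ + 1) := by positivity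
      have hlt : sInf {ν : ℝ≥0∞ | 0 < ν ∧ ∀ x : E, ENNReal.ofReal ⟪x, y⟫ ≤ ν * κ x}
          < ENNReal.ofReal l + ENNReal.ofReal (δ / (μ + 1)) := by
        refine lt_of_le_of_lt hle ?_
        exact ENNReal.lt_add_right ENNReal.ofReal_ne_top (ENNReal.ofReal_pos.2 hε).ne'
      obtain ⟨ν, ⟨-, hν2⟩, hνlt⟩ := sInf_lt_iff.1 hlt
      have h1 : ENNReal.ofReal ⟪x, y⟫ ≤ ENNReal.ofReal ((l + δ / (μ + 1)) * μ) := by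
        calc ENNReal.ofReal ⟪x, y⟫ ≤ ν * κ x := hν2 x
          _ ≤ (ENNReal.ofReal l + ENNReal.ofReal (δ / (μ + 1))) * ENNReal.ofReal μ := by
              exact mul_le_mul' hνlt.le hxμ
          _ = ENNReal.ofReal ((l + δ / (μ + 1)) * μ) := by
              rw [← ENNReal.ofReal_add hl hε.le, ← ENNReal.ofReal_mul (by positivity)]
      have h2 : ⟪x, y⟫ ≤ (l + δ / (μ + 1)) * μ :=
        (ENNReal.ofReal_le_ofReal_iff (by positivity)).1 h1
      have h3 : δ / (μ + 1) * μ ≤ δ := by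
        rw [div_mul_eq_mul_div, div_le_iff₀ (by positivity)]
        nlinarith
      nlinarith
    have : ⟪y, x⟫ = ⟪x, y⟫ := real_inner_comm _ _
    simp only [this]
    nlinarith
  · intro h
    have hl : 0 ≤ l := by
      by_contra hl
      push_neg at hl
      have h2 := h (0, 2 / (-l)) ⟨(div_pos two_pos (by linarith)).le, by simp [h0]⟩
      rw [inner_zero_right] at h2
      have : (-l) * (2 / (-l)) = 2 := mul_div_cancel₀ _ (by linarith)
      simp only [zero_add] at h2
      rw [this] at h2
      linarith
    have key : ∀ x μ, 0 ≤ μ → κ x ≤ ENNReal.ofReal μ → ⟪y, x⟫ ≤ l * μ := by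
      intro x μ hμ hx
      by_contra hc
      push_neg at hc
      set a := ⟪y, x⟫ - l * μ with ha
      have ha0 : 0 < a := sub_pos.2 hc
      have hmem : ((2 / a) • x, (2 / a) * μ) ∈ gaugeEpi κ := by
        refine ⟨by positivity, ?_⟩
        rw [hhom (2 / a) x (by positivity), ENNReal.ofReal_mul (by positivity)]
        exact mul_le_mul' le_rfl hx
      have h2 := h _ hmem
      rw [real_inner_smul_right] at h2
      have : 2 / a * ⟪y, x⟫ + -l * (2 / a * μ) = 2 / a * a := by ring
      rw [this] at h2
      rw [div_mul_cancel₀ _ (by linarith : a ≠ 0)] at h2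
      linarith
    refine ⟨hl, ?_⟩
    refine ENNReal.le_of_forall_pos_le_add fun ε hε _ => ?_
    have hε' : (0:ℝ≥0∞) < ε := ENNReal.coe_pos.2 hε
    refine sInf_le ⟨?_, fun x => ?_⟩
    · exact lt_of_lt_of_le hε' le_add_self
    · rcases eq_or_ne (κ x) ⊤ with hx | hx
      · rw [hx, ENNReal.mul_top]
        · exact le_top
        · intro hcontra
          rw [add_eq_zero] at hcontra
          exact hε'.ne' hcontra.2
      · have hxy := key x (κ x).toReal ENNReal.toReal_nonneg
          (by rw [ENNReal.ofReal_toReal hx])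
        calc ENNReal.ofReal ⟪x, y⟫ ≤ ENNReal.ofReal (l * (κ x).toReal) := by
              rw [real_inner_comm] at hxy
              exact ENNReal.ofReal_le_ofReal hxy
          _ = ENNReal.ofReal l * κ x := by
              rw [ENNReal.ofReal_mul hl, ENNReal.ofReal_toReal hx]
          _ ≤ (ENNReal.ofReal l + ε) * κ x := mul_le_mul' le_self_add le_rfl
end

section
/- Let D be a nonempty convex set in X with Minkowski function γ_D(x) = inf{λ ≥ 0 : x ∈ λD}. Then the polar gauge of γ_D equals the Minkowski function of the polar set: (γ_D)° = γ_{D°}. -/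
/-!
Both sides are the positive part of the support function `y ↦ sup_{x ∈ D} ⟨x, y⟩`. For the polar
gauge this is because `x ∈ l • D` gives `⟨x, y⟩ ≤ l · sup_D ⟨·, y⟩`, while every `x ∈ D` has
`γ_D(x) ≤ 1`; for `γ_{D°}` it is because `y ∈ l • D°` says exactly that `⟨·, y⟩ ≤ l` on `D`.
-/

open scoped RealInnerProductSpace ENNReal Pointwise

/-- The Minkowski function `γ_D(x) = inf {λ ≥ 0 : x ∈ λD}`, valued in `ℝ≥0∞`. -/
noncomputable def minkowski {E : Type*} [NormedAddCommGroup E] [NormedSpace ℝ E]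
    (D : Set E) (x : E) : ℝ≥0∞ :=
  sInf {μ : ℝ≥0∞ | ∃ l : ℝ, 0 ≤ l ∧ μ = ENNReal.ofReal l ∧ x ∈ l • D}

/-- The polar set `D° = {y : ⟨x,y⟩ ≤ 1 for all x ∈ D}`. -/
def polarSet {E : Type*} [NormedAddCommGroup E] [InnerProductSpace ℝ E] (D : Set E) :
    Set E :=
  {y : E | ∀ x ∈ D, ⟪x, y⟫ ≤ 1}

section Minkowski

variable {E : Type*} [NormedAddCommGroup E] [NormedSpace ℝ E] {D : Set E} {x : E}

theorem le_minkowski_iff {c : ℝ≥0∞} :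
    c ≤ minkowski D x ↔ ∀ l : ℝ, 0 ≤ l → x ∈ l • D → c ≤ ENNReal.ofReal l := by
  simp only [minkowski, le_sInf_iff, Set.mem_ofPred_eq]
  constructor
  · exact fun h l hl hx => h _ ⟨l, hl, rfl, hx⟩
  · rintro h _ ⟨l, hl, rfl, hx⟩
    exact h l hl hx

theorem minkowski_le_ofReal {l : ℝ} (hl : 0 ≤ l) (hx : x ∈ l • D) :
    minkowski D x ≤ ENNReal.ofReal l :=
  sInf_le ⟨l, hl, rfl, hx⟩

theorem minkowski_le_one_of_mem (hx : x ∈ D) : minkowski D x ≤ 1 := by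
  simpa using minkowski_le_ofReal (D := D) zero_le_one (by simpa using hx)

end Minkowski

/-- `ENNReal.ofReal` clips negative values, so this is the positive part of `σ_D`. -/
noncomputable def supportFunction {E : Type*} [NormedAddCommGroup E] [InnerProductSpace ℝ E]
    (D : Set E) (y : E) : ℝ≥0∞ :=
  ⨆ x ∈ D, ENNReal.ofReal ⟪x, y⟫

section Polar

variable {E : Type*} [NormedAddCommGroup E] [InnerProductSpace ℝ E] {D : Set E} {x y : E}

theorem supportFunction_le_ofReal_iff {l : ℝ} (hl : 0 ≤ l) :
    supportFunction D y ≤ ENNReal.ofReal l ↔ ∀ x ∈ D, ⟪x, y⟫ ≤ l := by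
  simp only [supportFunction, iSup₂_le_iff, ENNReal.ofReal_le_ofReal_iff hl]

theorem ofReal_inner_le_mul_supportFunction {l : ℝ} (hl : 0 ≤ l) (hx : x ∈ l • D) :
    ENNReal.ofReal ⟪x, y⟫ ≤ ENNReal.ofReal l * supportFunction D y := by
  obtain ⟨x', hx', rfl⟩ := hx
  rw [real_inner_smul_left, ENNReal.ofReal_mul hl]
  exact mul_le_mul_right (le_iSup₂ (f := fun x (_ : x ∈ D) => ENNReal.ofReal ⟪x, y⟫) x' hx') _

theorem ofReal_inner_le_mul_minkowski {c : ℝ≥0∞} (hc : supportFunction D y ≤ c) (hc0 : c ≠ 0)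
    (hctop : c ≠ ⊤) : ENNReal.ofReal ⟪x, y⟫ ≤ c * minkowski D x := by
  rw [mul_comm, ← ENNReal.div_le_iff hc0 hctop]
  refine le_minkowski_iff.2 fun l hl hx => (ENNReal.div_le_iff hc0 hctop).2 ?_
  exact (ofReal_inner_le_mul_supportFunction hl hx).trans (mul_le_mul_right hc _)

theorem polarGauge_minkowski_eq_supportFunction (D : Set E) (y : E) :
    polarGauge (minkowski D) y = supportFunction D y := by
  apply le_antisymm
  · refine le_of_forall_gt_imp_ge_of_dense fun c hc => ?_
    rcases eq_or_ne c ⊤ with rfl | hctop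
    · exact le_top
    have hc0 : c ≠ 0 := (pos_of_gt hc).ne'
    exact sInf_le ⟨pos_of_gt hc, fun x => ofReal_inner_le_mul_minkowski hc.le hc0 hctop⟩
  · refine le_sInf fun μ ⟨_, hμ⟩ => iSup₂_le fun x hx => ?_
    exact (hμ x).trans (mul_le_of_le_one_right' (minkowski_le_one_of_mem hx))

theorem mem_smul_polarSet_iff {l : ℝ} (hl : 0 < l) :
    y ∈ l • polarSet D ↔ ∀ x ∈ D, ⟪x, y⟫ ≤ l := by
  rw [Set.mem_smul_set_iff_inv_smul_mem₀ hl.ne']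
  refine forall₂_congr fun x _ => ?_
  rw [real_inner_smul_right, inv_mul_le_iff₀ hl, mul_one]

theorem inner_le_of_mem_smul_polarSet {l : ℝ} (hl : 0 ≤ l) (hy : y ∈ l • polarSet D) :
    ∀ x ∈ D, ⟪x, y⟫ ≤ l := by
  rcases hl.eq_or_lt with rfl | hl
  · rw [Set.mem_zero.1 (Set.zero_smul_set_subset _ hy)]
    simp
  · exact (mem_smul_polarSet_iff hl).1 hy

theorem minkowski_polarSet_eq_supportFunction (D : Set E) (y : E) :
    minkowski (polarSet D) y = supportFunction D y := by
  apply le_antisymm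
  · refine le_of_forall_gt_imp_ge_of_dense fun c hc => ?_
    rcases eq_or_ne c ⊤ with rfl | hctop
    · exact le_top
    have hl : 0 < c.toReal := ENNReal.toReal_pos (pos_of_gt hc).ne' hctop
    rw [← ENNReal.ofReal_toReal hctop] at hc ⊢
    refine minkowski_le_ofReal hl.le ((mem_smul_polarSet_iff hl).2 ?_)
    exact (supportFunction_le_ofReal_iff hl.le).1 hc.le
  · exact le_minkowski_iff.2 fun l hl hy =>
      (supportFunction_le_ofReal_iff hl).2 (inner_le_of_mem_smul_polarSet hl hy)

end Polar

theorem polarGauge_minkowski_eq_minkowski_polarSet_general {E : Type*} [NormedAddCommGroup E]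
    [InnerProductSpace ℝ E] (D : Set E) :
    ∀ y : E, polarGauge (minkowski D) y = minkowski (polarSet D) y := fun y =>
  (polarGauge_minkowski_eq_supportFunction D y).trans
    (minkowski_polarSet_eq_supportFunction D y).symm

theorem polarGauge_minkowski_eq_minkowski_polarSet {E : Type*} [NormedAddCommGroup E]
    [InnerProductSpace ℝ E] [FiniteDimensional ℝ E] (D : Set E) (hD : D.Nonempty)
    (hconv : Convex ℝ D) :
    ∀ y : E, polarGauge (minkowski D) y = minkowski (polarSet D) y :=
  polarGauge_minkowski_eq_minkowski_polarSet_general D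
end

section
/- Let C₁ and C₂ be nonempty ray-like closed convex sets not containing the origin with C₁ ∩ C₂ ≠ ∅. Then (C₁ ∩ C₂)′ = cl conv(C₁′ ∪ C₂′), and both sets are nonempty. -/
open scoped RealInnerProductSpace Pointwise

/-- The antipolar `S′ = {y : ⟨y,s⟩ ≥ 1 for all s ∈ S}`. -/
def antipolar {E : Type*} [NormedAddCommGroup E] [InnerProductSpace ℝ E] (S : Set E) :
    Set E :=
  {y : E | ∀ x ∈ S, 1 ≤ ⟪y, x⟫}

/-- A set is ray-like if `x, y ∈ D` and `α ≥ 0` imply `x + αy ∈ D`. -/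
def RayLike {E : Type*} [NormedAddCommGroup E] [NormedSpace ℝ E] (D : Set E) : Prop :=
  ∀ x ∈ D, ∀ y ∈ D, ∀ α : ℝ, 0 ≤ α → x + α • y ∈ D

section Aux

variable {E : Type*} [NormedAddCommGroup E] [InnerProductSpace ℝ E]

lemma antipolar_antitone {S T : Set E} (h : S ⊆ T) : antipolar T ⊆ antipolar S :=
  fun _ hy x hx => hy x (h hx)

lemma exists_sep [FiniteDimensional ℝ E] {C : Set E} (hc : IsClosed C) (hconv : Convex ℝ C)
    {x : E} (hx : x ∉ C) : ∃ y : E, ∃ b : ℝ, ⟪y, x⟫ < b ∧ ∀ c ∈ C, b < ⟪y, c⟫ := by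
  obtain ⟨f, u, hfc, hfx⟩ := geometric_hahn_banach_closed_point hconv hc hx
  refine ⟨-(InnerProductSpace.toDual ℝ E).symm f, -u, ?_, fun c hcC => ?_⟩
  · rw [inner_neg_left, InnerProductSpace.toDual_symm_apply]
    linarith
  · rw [inner_neg_left, InnerProductSpace.toDual_symm_apply]
    linarith [hfc c hcC]

lemma exists_mem_antipolar [FiniteDimensional ℝ E] {C : Set E} (hc : IsClosed C)
    (hconv : Convex ℝ C) (h0 : (0 : E) ∉ C) : ∃ z, z ∈ antipolar C := by
  obtain ⟨y, b, hyx, hyc⟩ := exists_sep hc hconv h0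
  rw [inner_zero_right] at hyx
  refine ⟨b⁻¹ • y, fun c hcC => ?_⟩
  rw [real_inner_smul_left]
  have h1 := hyc c hcC
  have hbinv : (0:ℝ) < b⁻¹ := inv_pos.mpr hyx
  nlinarith [mul_inv_cancel₀ (ne_of_gt hyx)]

lemma bipolar [FiniteDimensional ℝ E] {C : Set E} (hne : C.Nonempty) (hc : IsClosed C)
    (hconv : Convex ℝ C) (hray : RayLike C) (h0 : (0 : E) ∉ C) :
    antipolar (antipolar C) = C := by
  apply Set.Subset.antisymm
  · intro x hx
    by_contra hxC
    obtain ⟨y, b, hyx, hyc⟩ := exists_sep hc hconv hxC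
    -- the separating functional is nonnegative on C, by ray-likeness
    have hnn : ∀ d ∈ C, 0 ≤ ⟪y, d⟫ := by
      intro d hd
      by_contra hcon
      push_neg at hcon
      obtain ⟨c, hcC⟩ := hne
      have hcb : b < ⟪y, c⟫ := hyc c hcC
      set α : ℝ := (⟪y, c⟫ - b) / (-⟪y, d⟫) with hα
      have hαpos : 0 ≤ α := div_nonneg (by linarith) (by linarith)
      have hmem := hray c hcC d hd α hαpos
      have hkey := hyc _ hmem
      rw [inner_add_right, real_inner_smul_right] at hkey
      have hmc : (⟪y, c⟫ - b) / (-⟪y, d⟫) * (-⟪y, d⟫) = ⟪y, c⟫ - b :=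
        div_mul_cancel₀ _ (ne_of_gt (by linarith))
      rw [mul_neg, ← hα] at hmc
      linarith
    by_cases hb : 0 < b
    · have hw : b⁻¹ • y ∈ antipolar C := by
        intro c hcC
        rw [real_inner_smul_left]
        have h1 := hyc c hcC
        have hbinv : (0:ℝ) < b⁻¹ := inv_pos.mpr hb
        nlinarith [mul_inv_cancel₀ (ne_of_gt hb)]
      have h2 := hx _ hw
      rw [real_inner_smul_right, real_inner_comm] at h2
      have hbinv : (0:ℝ) < b⁻¹ := inv_pos.mpr hb
      nlinarith [mul_inv_cancel₀ (ne_of_gt hb)]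
    · push_neg at hb
      have hyxneg : ⟪y, x⟫ < 0 := lt_of_lt_of_le hyx hb
      obtain ⟨z, hz⟩ := exists_mem_antipolar hc hconv h0
      set t : ℝ := max 0 ((⟪z, x⟫ - 1) / (-⟪y, x⟫) + 1) with ht
      have htnn : 0 ≤ t := le_max_left _ _
      have hw : z + t • y ∈ antipolar C := by
        intro c hcC
        rw [inner_add_left, real_inner_smul_left]
        have := hz c hcC
        have := hnn c hcC
        nlinarith
      have h2 := hx _ hw
      rw [inner_add_right, real_inner_smul_right] at h2
      have e1 : ⟪x, z⟫ = ⟪z, x⟫ := (real_inner_comm x z).symm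
      have e2 : ⟪x, y⟫ = ⟪y, x⟫ := (real_inner_comm x y).symm
      rw [e1, e2] at h2
      have htge : (⟪z, x⟫ - 1) / (-⟪y, x⟫) + 1 ≤ t := le_max_right _ _
      have hdiv : (⟪z, x⟫ - 1) / (-⟪y, x⟫) * (-⟪y, x⟫) = ⟪z, x⟫ - 1 :=
        div_mul_cancel₀ _ (by linarith)
      nlinarith
  · intro c hcC w hw
    rw [real_inner_comm]
    exact hw c hcC

lemma antipolar_union (A B : Set E) : antipolar (A ∪ B) = antipolar A ∩ antipolar B := by
  ext y
  simp only [antipolar, Set.mem_setOf_eq, Set.mem_union, Set.mem_inter_iff, or_imp, forall_and]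

lemma antipolar_closure_convexHull (S : Set E) :
    antipolar (closure (convexHull ℝ S)) = antipolar S := by
  apply Set.Subset.antisymm
  · exact antipolar_antitone ((subset_convexHull ℝ S).trans subset_closure)
  · intro y hy x hx
    have hH : closure (convexHull ℝ S) ⊆ {x : E | 1 ≤ ⟪y, x⟫} := by
      apply closure_minimal
      · apply convexHull_min hy
        exact convex_halfSpace_ge ⟨fun a b => inner_add_right y a b,
          fun r a => real_inner_smul_right y a r⟩ 1
      · exact isClosed_le continuous_const (Continuous.inner continuous_const continuous_id)
    exact hH hx

lemma antipolar_smul_mem {S : Set E} {w : E} (hw : w ∈ antipolar S) {s : ℝ} (hs : 1 ≤ s) :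
    s • w ∈ antipolar S := by
  intro x hx
  rw [real_inner_smul_left]
  nlinarith [hw x hx]

lemma rayLike_of_smul {D : Set E} (hconv : Convex ℝ D)
    (hsmul : ∀ x ∈ D, ∀ s : ℝ, 1 ≤ s → s • x ∈ D) : RayLike D := by
  intro x hx y hy α hα
  have hpos : (0:ℝ) < 1 + α := by linarith
  have hmid : (1 / (1 + α)) • x + (α / (1 + α)) • y ∈ D := by
    apply hconv hx hy (by positivity) (by positivity)
    field_simp
  have h2 := hsmul _ hmid (1 + α) (by linarith)
  have : (1 + α) • ((1 / (1 + α)) • x + (α / (1 + α)) • y) = x + α • y := by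
    rw [smul_add, smul_smul, smul_smul]
    have e1 : (1 + α) * (1 / (1 + α)) = 1 := by field_simp
    have e2 : (1 + α) * (α / (1 + α)) = α := by field_simp
    rw [e1, e2, one_smul]
  rwa [this] at h2

end Aux

theorem antipolar_inter {E : Type*} [NormedAddCommGroup E] [InnerProductSpace ℝ E]
    [FiniteDimensional ℝ E] (C₁ C₂ : Set E) (h₁ : C₁.Nonempty) (h₂ : C₂.Nonempty)
    (h₁c : IsClosed C₁) (h₂c : IsClosed C₂) (h₁conv : Convex ℝ C₁) (h₂conv : Convex ℝ C₂)
    (h₁ray : RayLike C₁) (h₂ray : RayLike C₂) (h₁0 : (0 : E) ∉ C₁) (h₂0 : (0 : E) ∉ C₂)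
    (hinter : (C₁ ∩ C₂).Nonempty) :
    antipolar (C₁ ∩ C₂) = closure (convexHull ℝ (antipolar C₁ ∪ antipolar C₂)) ∧
    (antipolar (C₁ ∩ C₂)).Nonempty ∧
    (closure (convexHull ℝ (antipolar C₁ ∪ antipolar C₂))).Nonempty := by
  obtain ⟨s₀, hs₁, hs₂⟩ := hinter
  obtain ⟨z₁, hz₁⟩ := exists_mem_antipolar h₁c h₁conv h₁0
  set U : Set E := antipolar C₁ ∪ antipolar C₂ with hU
  set D : Set E := closure (convexHull ℝ U) with hD
  have hDne : D.Nonempty := ⟨z₁, subset_closure (subset_convexHull ℝ U (Or.inl hz₁))⟩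
  have hDc : IsClosed D := isClosed_closure
  have hDconv : Convex ℝ D := (convex_convexHull ℝ U).closure
  -- D is stable under scaling by s ≥ 1
  have hDsmul : ∀ x ∈ D, ∀ s : ℝ, 1 ≤ s → s • x ∈ D := by
    intro x hx s hs
    have hsub : s • convexHull ℝ U ⊆ convexHull ℝ U := by
      rw [← convexHull_smul]
      apply convexHull_mono
      rw [hU, Set.smul_set_union]
      apply Set.union_subset_union
      · rintro _ ⟨w, hw, rfl⟩
        exact antipolar_smul_mem hw hs
      · rintro _ ⟨w, hw, rfl⟩
        exact antipolar_smul_mem hw hs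
    have : s • x ∈ closure (s • convexHull ℝ U) := by
      have him := image_closure_subset_closure_image (f := fun z : E => s • z)
        (s := convexHull ℝ U) (continuous_const_smul s)
      exact him ⟨x, hx, rfl⟩
    exact closure_mono hsub this
  have hDray : RayLike D := rayLike_of_smul hDconv hDsmul
  have hD0 : (0 : E) ∉ D := by
    have hH : D ⊆ {y : E | 1 ≤ ⟪y, s₀⟫} := by
      apply closure_minimal
      · apply convexHull_min
        · rintro y (hy | hy)
          · exact hy s₀ hs₁
          · exact hy s₀ hs₂
        · exact convex_halfSpace_ge ⟨fun a b => inner_add_left a b s₀,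
            fun r a => real_inner_smul_left a s₀ r⟩ 1
      · exact isClosed_le continuous_const
          (Continuous.inner continuous_id continuous_const)
    intro h
    have := hH h
    rw [Set.mem_setOf_eq, inner_zero_left] at this
    linarith
  have hD' : antipolar D = C₁ ∩ C₂ := by
    rw [hD, antipolar_closure_convexHull, hU, antipolar_union,
      bipolar h₁ h₁c h₁conv h₁ray h₁0, bipolar h₂ h₂c h₂conv h₂ray h₂0]
  refine ⟨?_, ⟨z₁, fun x hx => hz₁ x hx.1⟩, hDne⟩
  rw [← hD', bipolar hDne hDc hDconv hDray hD0]
end
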